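/- If Γ₁ and Γ₂ are finite connected graphs joined at a single vertex (wedge sum), then the Jacobian of the wedge is isomorphic to the direct sum Jac(Γ₁) ⊕ Jac(Γ₂). -/

import Mathlib

/-- A finite (multi)graph: finite vertex and edge sets, each edge with a
source and target endpoint (orientation is irrelevant; loops allowed). -/
structure FinGraph where
  V : Type
  E : Type
  [fintypeV : Fintype V]
  [fintypeE : Fintype E]
  [decEqV : DecidableEq V]
  s : E → V
  t : E → V

attribute [instance] FinGraph.fintypeV FinGraph.fintypeE FinGraph.decEqV

namespace FinGraph

variable (G : FinGraph)

/-- Two vertices are adjacent if some edge joins them. -/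
def Adj (u v : G.V) : Prop :=
  ∃ e : G.E, (G.s e = u ∧ G.t e = v) ∨ (G.s e = v ∧ G.t e = u)

/-- Vertices in the same connected component. -/
def Reach (u v : G.V) : Prop := Relation.ReflTransGen G.Adj u v

/-- The number of connected components. -/
noncomputable def numComponents : ℕ := Nat.card (Quot G.Reach)

/-- The genus (first Betti number) `e - v + f` as an integer. -/
noncomputable def genus : ℤ :=
  (Fintype.card G.E : ℤ) - (Fintype.card G.V : ℤ) + (G.numComponents : ℤ)

/-- A graph is connected if it is nonempty and any two vertices are joined by a path. -/
def Connected : Prop := Nonempty G.V ∧ ∀ u v : G.V, G.Reach u v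

/-- The valence of a vertex (loops counted twice). -/
def val (v : G.V) : ℕ :=
  (Finset.univ.filter fun e => G.s e = v).card +
  (Finset.univ.filter fun e => G.t e = v).card

/-- The canonical divisor `K(v) = val(v) - 2`. -/
def canonical : G.V → ℤ := fun v => (G.val v : ℤ) - 2

/-- The degree of a divisor: the total number of chips. -/
def deg (D : G.V → ℤ) : ℤ := ∑ v, D v

/-- A divisor is effective if it is nonnegative everywhere. -/
def Effective (D : G.V → ℤ) : Prop := ∀ v, 0 ≤ D v

/-- The principal divisor (Laplacian) associated to `f : V → ℤ`. -/
def divOf (f : G.V → ℤ) : G.V → ℤ := fun v =>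
  ∑ e : G.E,
    ((if G.s e = v then f (G.t e) - f (G.s e) else 0) +
     (if G.t e = v then f (G.s e) - f (G.t e) else 0))

/-- A divisor is principal if it is the Laplacian of some integer function. -/
def Principal (D : G.V → ℤ) : Prop := ∃ f : G.V → ℤ, D = G.divOf f

/-- Linear equivalence of divisors. -/
def LinEquiv (D D' : G.V → ℤ) : Prop := G.Principal (D - D')

/-- A divisor is winnable (has nonempty linear system) if it is linearly
equivalent to an effective divisor. -/
def Winnable (D : G.V → ℤ) : Prop := ∃ E, G.Effective E ∧ G.LinEquiv D E

/-- `D` has rank at least `r` : removing any `r` chips leaves a winnable divisor. -/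
def RankGE (D : G.V → ℤ) (r : ℕ) : Prop :=
  ∀ E : G.V → ℤ, G.Effective E → G.deg E = (r : ℤ) → G.Winnable (D - E)

/-- The Baker–Norine rank of a divisor. -/
noncomputable def rank (D : G.V → ℤ) : ℤ :=
  sSup (insert (-1) {r : ℤ | ∃ n : ℕ, r = (n : ℤ) ∧ G.RankGE D n})

/-- Degree as an additive group homomorphism. -/
noncomputable def degHom : (G.V → ℤ) →+ ℤ where
  toFun := G.deg
  map_zero' := by simp [deg]
  map_add' := fun a b => by simp [deg, Finset.sum_add_distrib]

/-- The Laplacian as an additive group homomorphism. -/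
noncomputable def lapHom : (G.V → ℤ) →+ (G.V → ℤ) where
  toFun := G.divOf
  map_zero' := by funext v; simp [divOf]
  map_add' := fun a b => by
    funext v
    simp only [divOf, Pi.add_apply, ← Finset.sum_add_distrib]
    exact Finset.sum_congr rfl fun e _ => by split_ifs <;> ring

/-- The Jacobian: degree-zero divisors modulo principal divisors. -/
noncomputable def Jac :=
  G.degHom.ker ⧸ (G.lapHom.range.addSubgroupOf G.degHom.ker)

noncomputable instance : AddCommGroup G.Jac :=
  QuotientAddGroup.Quotient.addCommGroup _

/-- Reachability using only edges from the set `S`. -/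
def ReachIn (S : Finset G.E) (u v : G.V) : Prop :=
  Relation.ReflTransGen
    (fun a b => ∃ e ∈ S, (G.s e = a ∧ G.t e = b) ∨ (G.s e = b ∧ G.t e = a)) u v

/-- Reachability avoiding the edges in `S`. -/
def ReachAvoid (S : Finset G.E) (u v : G.V) : Prop :=
  Relation.ReflTransGen
    (fun a b => ∃ e, e ∉ S ∧ ((G.s e = a ∧ G.t e = b) ∨ (G.s e = b ∧ G.t e = a))) u v

/-- A spanning tree: a set of edges connecting all vertices, with one fewer
edge than there are vertices. -/
def IsSpanningTree (T : Finset G.E) : Prop :=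
  (∀ u v : G.V, G.ReachIn T u v) ∧ T.card + 1 = Fintype.card G.V

end FinGraph

/-- A free double cover of finite graphs: a two-to-one local isomorphism
whose deck involution acts freely on vertices and edges. -/
structure FreeDoubleCover (Gt G : FinGraph) where
  vMap : Gt.V → G.V
  eMap : Gt.E → G.E
  invV : Gt.V → Gt.V
  invE : Gt.E → Gt.E
  invV_invV : ∀ v, invV (invV v) = v
  invE_invE : ∀ e, invE (invE e) = e
  invV_ne : ∀ v, invV v ≠ v
  invE_ne : ∀ e, invE e ≠ e
  vMap_invV : ∀ v, vMap (invV v) = vMap v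
  eMap_invE : ∀ e, eMap (invE e) = eMap e
  s_comm : ∀ e, vMap (Gt.s e) = G.s (eMap e)
  t_comm : ∀ e, vMap (Gt.t e) = G.t (eMap e)
  s_invE : ∀ e, Gt.s (invE e) = invV (Gt.s e)
  t_invE : ∀ e, Gt.t (invE e) = invV (Gt.t e)
  fiberV : ∀ a b : Gt.V, vMap a = vMap b → b = a ∨ b = invV a
  fiberE : ∀ a b : Gt.E, eMap a = eMap b → b = a ∨ b = invE a
  vMap_surj : Function.Surjective vMap
  eMap_surj : Function.Surjective eMap

/-- The wedge of two graphs: identify `p₁ ∈ Γ₁` with `p₂ ∈ Γ₂`. -/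
def FinGraph.wedge (G₁ G₂ : FinGraph) (p₁ : G₁.V) (p₂ : G₂.V) : FinGraph where
  V := {x : G₁.V ⊕ G₂.V // x ≠ Sum.inr p₂}
  E := G₁.E ⊕ G₂.E
  s := fun e =>
    match e with
    | Sum.inl e₁ => ⟨Sum.inl (G₁.s e₁), by simp⟩
    | Sum.inr e₂ =>
        if h : G₂.s e₂ = p₂ then ⟨Sum.inl p₁, by simp⟩
        else ⟨Sum.inr (G₂.s e₂), by simp [h]⟩
  t := fun e =>
    match e with
    | Sum.inl e₁ => ⟨Sum.inl (G₁.t e₁), by simp⟩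
    | Sum.inr e₂ =>
        if h : G₂.t e₂ = p₂ then ⟨Sum.inl p₁, by simp⟩
        else ⟨Sum.inr (G₂.t e₂), by simp [h]⟩

/-!
The wedge `W` comes with inclusions `Γᵢ → W` and retractions `W → Γᵢ` collapsing the other
graph to the base point. Every edge of `W` lies in exactly one `Γᵢ`, so the Laplacian of `W` is
the sum of the pushforwards of the Laplacians of `Γ₁` and `Γ₂`. Hence pushing divisors forward,
along the inclusions or along the retractions, preserves principal divisors, and this induces
maps `Jac W ⇄ Jac Γ₁ × Jac Γ₂`. They are mutually inverse because a divisor on `W` is the sum of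
the pushforwards of its two retractions, up to its degree placed at the base point.
-/

namespace FinGraph

section Pushforward

variable {α β γ : Type*} [Fintype α] [DecidableEq β]

def pushforward (φ : α → β) : (α → ℤ) →+ (β → ℤ) where
  toFun D := ∑ a, Pi.single (φ a) (D a)
  map_zero' := by simp
  map_add' D D' := by simp [Pi.single_add, Finset.sum_add_distrib]

@[simp] lemma pushforward_single [DecidableEq α] (φ : α → β) (a : α) (c : ℤ) :
    pushforward φ (Pi.single a c) = Pi.single (φ a) c := by
  refine (Finset.sum_eq_single a (fun a' _ ha' => ?_) (by simp)).trans (by simp)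
  simp [Pi.single_eq_of_ne ha']

lemma pushforward_comp [DecidableEq α] [Fintype β] [DecidableEq γ] (ψ : β → γ) (φ : α → β) :
    pushforward (ψ ∘ φ) = (pushforward ψ).comp (pushforward φ) :=
  AddMonoidHom.functions_ext _ _ _ fun a c => by simp

lemma pushforward_id [DecidableEq α] : pushforward (id : α → α) = AddMonoidHom.id _ :=
  AddMonoidHom.functions_ext _ _ _ fun a c => by simp

lemma pushforward_const (b : β) (D : α → ℤ) :
    pushforward (fun _ : α => b) D = Pi.single b (∑ a, D a) :=
  (map_sum (AddMonoidHom.single (fun _ => ℤ) b) D Finset.univ).symm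

lemma sum_pushforward [Fintype β] (φ : α → β) (D : α → ℤ) :
    ∑ b, pushforward φ D b = ∑ a, D a := by
  simp [pushforward, Finset.sum_apply, Finset.sum_comm (γ := β), Pi.single_apply]

end Pushforward

section EdgeDivisor

variable {α β : Type*} [DecidableEq α] [DecidableEq β]

def edgeDivOf (a b : α) (f : α → ℤ) : α → ℤ :=
  Pi.single a (f b - f a) + Pi.single b (f a - f b)

lemma sum_edgeDivOf [Fintype α] (a b : α) (f : α → ℤ) : ∑ v, edgeDivOf a b f v = 0 := by
  simp [edgeDivOf, Finset.sum_add_distrib]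

@[simp] lemma edgeDivOf_const (a b : α) (c : ℤ) : edgeDivOf a b (fun _ => c) = 0 := by
  simp [edgeDivOf]

lemma pushforward_edgeDivOf [Fintype α] (φ : α → β) (a b : α) (f : β → ℤ) :
    pushforward φ (edgeDivOf a b (f ∘ φ)) = edgeDivOf (φ a) (φ b) f := by
  simp [edgeDivOf]

end EdgeDivisor

section Laplacian

variable (G : FinGraph)

lemma divOf_eq_sum_edgeDivOf (f : G.V → ℤ) :
    G.divOf f = ∑ e, edgeDivOf (G.s e) (G.t e) f := by
  funext v
  simp [divOf, edgeDivOf, Finset.sum_apply, Pi.single_apply, eq_comm]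

lemma deg_divOf (f : G.V → ℤ) : G.deg (G.divOf f) = 0 := by
  rw [deg, divOf_eq_sum_edgeDivOf]
  simp [Finset.sum_apply, Finset.sum_comm (γ := G.V), sum_edgeDivOf]

lemma degHom_apply (D : G.V → ℤ) : G.degHom D = G.deg D := rfl

lemma deg_single (v : G.V) (c : ℤ) : G.deg (Pi.single v c) = c := by
  simp [deg]

lemma divOf_const (c : ℤ) : G.divOf (fun _ => c) = 0 := by
  simp [divOf_eq_sum_edgeDivOf]

end Laplacian

section Jacobian

variable {G H : FinGraph}

lemma deg_pushforward (φ : G.V → H.V) (D : G.V → ℤ) : H.deg (pushforward φ D) = G.deg D :=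
  sum_pushforward φ D

noncomputable def Jac.mk (D : G.V → ℤ) (hD : G.deg D = 0) : G.Jac :=
  QuotientAddGroup.mk (⟨D, hD⟩ : G.degHom.ker)

namespace Jac

lemma mk_add (D D' : G.V → ℤ) (hD : G.deg D = 0) (hD' : G.deg D' = 0) :
    mk D hD + mk D' hD' = mk (D + D') (by rw [← degHom_apply, map_add, degHom_apply,
      degHom_apply, hD, hD', add_zero]) :=
  rfl

@[elab_as_elim]
lemma induction_on {P : G.Jac → Prop} (x : G.Jac) (h : ∀ D hD, P (mk D hD)) : P x :=
  QuotientAddGroup.induction_on x fun D => h D.1 D.2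

lemma hom_ext {M : Type*} [AddMonoid M] {f g : G.Jac →+ M}
    (h : ∀ D hD, f (mk D hD) = g (mk D hD)) : f = g :=
  AddMonoidHom.ext fun x => induction_on x h

noncomputable def pushforward (φ : G.V → H.V)
    (hdiv : ∀ f, ∃ g, FinGraph.pushforward φ (G.divOf f) = H.divOf g) : G.Jac →+ H.Jac :=
  QuotientAddGroup.map _ _
    (((FinGraph.pushforward φ).comp G.degHom.ker.subtype).codRestrict H.degHom.ker fun D =>
      (deg_pushforward φ D).trans D.2)
    (by
      rintro D ⟨f, hf⟩
      obtain ⟨g, hg⟩ := hdiv f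
      exact ⟨g, hg.symm.trans (congrArg _ hf)⟩)

lemma pushforward_mk (φ : G.V → H.V) (hdiv) (D : G.V → ℤ) (hD : G.deg D = 0) :
    pushforward φ hdiv (mk D hD) =
      mk (FinGraph.pushforward φ D) ((deg_pushforward φ D).trans hD) :=
  rfl

end Jac

end Jacobian

end FinGraph

namespace FinGraph.wedge

variable {G₁ G₂ : FinGraph} (p₁ : G₁.V) (p₂ : G₂.V)

def inl (v : G₁.V) : (G₁.wedge G₂ p₁ p₂).V := ⟨Sum.inl v, by simp⟩

def inr (w : G₂.V) : (G₁.wedge G₂ p₁ p₂).V :=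
  if h : w = p₂ then ⟨Sum.inl p₁, by simp⟩ else ⟨Sum.inr w, by simp [h]⟩

def projLeft (x : (G₁.wedge G₂ p₁ p₂).V) : G₁.V := Sum.elim id (fun _ => p₁) x.1

def projRight (x : (G₁.wedge G₂ p₁ p₂).V) : G₂.V := Sum.elim (fun _ => p₂) id x.1

lemma inr_base : inr p₁ p₂ p₂ = inl p₁ p₂ p₁ := dif_pos rfl

lemma inr_of_ne {w : G₂.V} (h : w ≠ p₂) : inr p₁ p₂ w = ⟨Sum.inr w, by simp [h]⟩ := dif_neg h

lemma projLeft_comp_inl : projLeft p₁ p₂ ∘ inl p₁ p₂ = id := rfl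

lemma projLeft_comp_inr : projLeft p₁ p₂ ∘ inr p₁ p₂ = fun _ => p₁ := by
  funext w
  by_cases h : w = p₂
  · simp [h, inr_base, inl, projLeft]
  · simp [inr_of_ne p₁ p₂ h, projLeft]

lemma projRight_comp_inl : projRight p₁ p₂ ∘ inl p₁ p₂ = fun _ => p₂ := rfl

lemma projRight_comp_inr : projRight p₁ p₂ ∘ inr p₁ p₂ = id := by
  funext w
  by_cases h : w = p₂
  · simp [h, inr_base, inl, projRight]
  · simp [inr_of_ne p₁ p₂ h, projRight]

lemma divOf_wedge (f : (G₁.wedge G₂ p₁ p₂).V → ℤ) :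
    (G₁.wedge G₂ p₁ p₂).divOf f =
      pushforward (inl p₁ p₂) (G₁.divOf (f ∘ inl p₁ p₂)) +
        pushforward (inr p₁ p₂) (G₂.divOf (f ∘ inr p₁ p₂)) := by
  simp only [divOf_eq_sum_edgeDivOf, map_sum, pushforward_edgeDivOf]
  exact Fintype.sum_sum_type _

lemma pushforward_projLeft_inl (D : G₁.V → ℤ) :
    pushforward (projLeft p₁ p₂) (pushforward (inl p₁ p₂) D) = D := by
  rw [← AddMonoidHom.comp_apply, ← pushforward_comp, projLeft_comp_inl, pushforward_id,
    AddMonoidHom.id_apply]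

lemma pushforward_projLeft_inr (D : G₂.V → ℤ) :
    pushforward (projLeft p₁ p₂) (pushforward (inr p₁ p₂) D) = Pi.single p₁ (G₂.deg D) := by
  rw [← AddMonoidHom.comp_apply, ← pushforward_comp, projLeft_comp_inr, pushforward_const, deg]

lemma pushforward_projRight_inl (D : G₁.V → ℤ) :
    pushforward (projRight p₁ p₂) (pushforward (inl p₁ p₂) D) = Pi.single p₂ (G₁.deg D) := by
  rw [← AddMonoidHom.comp_apply, ← pushforward_comp, projRight_comp_inl, pushforward_const, deg]

lemma pushforward_projRight_inr (D : G₂.V → ℤ) :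
    pushforward (projRight p₁ p₂) (pushforward (inr p₁ p₂) D) = D := by
  rw [← AddMonoidHom.comp_apply, ← pushforward_comp, projRight_comp_inr, pushforward_id,
    AddMonoidHom.id_apply]

lemma single_inl_projLeft_add_single_inr_projRight (x : (G₁.wedge G₂ p₁ p₂).V) (c : ℤ) :
    (Pi.single (inl p₁ p₂ (projLeft p₁ p₂ x)) c : (G₁.wedge G₂ p₁ p₂).V → ℤ) +
        Pi.single (inr p₁ p₂ (projRight p₁ p₂ x)) c =
      Pi.single x c + Pi.single (inl p₁ p₂ p₁) c := by
  rcases x with ⟨v | w, h⟩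
  · simp only [projRight, Sum.elim_inl, inr_base]
    rfl
  · have hw : w ≠ p₂ := by simpa using h
    simp only [projLeft, projRight, Sum.elim_inr, id, inr_of_ne p₁ p₂ hw]
    exact add_comm _ _

lemma pushforward_inl_projLeft_add (D : (G₁.wedge G₂ p₁ p₂).V → ℤ) :
    pushforward (inl p₁ p₂) (pushforward (projLeft p₁ p₂) D) +
        pushforward (inr p₁ p₂) (pushforward (projRight p₁ p₂) D) =
      D + Pi.single (inl p₁ p₂ p₁) ((G₁.wedge G₂ p₁ p₂).deg D) := by
  have key := AddMonoidHom.functions_ext _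
    ((pushforward (inl p₁ p₂)).comp (pushforward (projLeft p₁ p₂)) +
      (pushforward (inr p₁ p₂)).comp (pushforward (projRight p₁ p₂)))
    (AddMonoidHom.id _ + (AddMonoidHom.single _ (inl p₁ p₂ p₁)).comp (G₁.wedge G₂ p₁ p₂).degHom)
    fun x c => by
      simpa [degHom_apply, deg_single] using
        single_inl_projLeft_add_single_inr_projRight p₁ p₂ x c
  exact DFunLike.congr_fun key D

lemma pushforward_inl_divOf (g : G₁.V → ℤ) :
    pushforward (inl p₁ p₂) (G₁.divOf g) = (G₁.wedge G₂ p₁ p₂).divOf (g ∘ projLeft p₁ p₂) := by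
  rw [divOf_wedge, Function.comp_assoc, Function.comp_assoc, projLeft_comp_inl,
    projLeft_comp_inr, Function.comp_id]
  simp [Function.comp_def, divOf_const]

lemma pushforward_inr_divOf (g : G₂.V → ℤ) :
    pushforward (inr p₁ p₂) (G₂.divOf g) = (G₁.wedge G₂ p₁ p₂).divOf (g ∘ projRight p₁ p₂) := by
  rw [divOf_wedge, Function.comp_assoc, Function.comp_assoc, projRight_comp_inl,
    projRight_comp_inr, Function.comp_id]
  simp [Function.comp_def, divOf_const]

lemma pushforward_projLeft_divOf (f : (G₁.wedge G₂ p₁ p₂).V → ℤ) :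
    pushforward (projLeft p₁ p₂) ((G₁.wedge G₂ p₁ p₂).divOf f) = G₁.divOf (f ∘ inl p₁ p₂) := by
  rw [divOf_wedge, map_add, pushforward_projLeft_inl, pushforward_projLeft_inr, deg_divOf,
    Pi.single_zero, add_zero]

lemma pushforward_projRight_divOf (f : (G₁.wedge G₂ p₁ p₂).V → ℤ) :
    pushforward (projRight p₁ p₂) ((G₁.wedge G₂ p₁ p₂).divOf f) = G₂.divOf (f ∘ inr p₁ p₂) := by
  rw [divOf_wedge, map_add, pushforward_projRight_inl, pushforward_projRight_inr, deg_divOf,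
    Pi.single_zero, zero_add]

noncomputable def jacToProd : (G₁.wedge G₂ p₁ p₂).Jac →+ G₁.Jac × G₂.Jac :=
  (Jac.pushforward (projLeft p₁ p₂) fun f => ⟨_, pushforward_projLeft_divOf p₁ p₂ f⟩).prod
    (Jac.pushforward (projRight p₁ p₂) fun f => ⟨_, pushforward_projRight_divOf p₁ p₂ f⟩)

noncomputable def jacOfProd : G₁.Jac × G₂.Jac →+ (G₁.wedge G₂ p₁ p₂).Jac :=
  (Jac.pushforward (inl p₁ p₂) fun g => ⟨_, pushforward_inl_divOf p₁ p₂ g⟩).coprod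
    (Jac.pushforward (inr p₁ p₂) fun g => ⟨_, pushforward_inr_divOf p₁ p₂ g⟩)

lemma jacOfProd_comp_jacToProd :
    (jacOfProd p₁ p₂).comp (jacToProd p₁ p₂) = AddMonoidHom.id _ :=
  Jac.hom_ext fun D hD => by
    simp only [jacToProd, jacOfProd, AddMonoidHom.comp_apply, AddMonoidHom.prod_apply,
      AddMonoidHom.coprod_apply, Jac.pushforward_mk, Jac.mk_add, AddMonoidHom.id_apply]
    congr 1
    rw [pushforward_inl_projLeft_add, hD, Pi.single_zero, add_zero]

lemma jacToProd_comp_jacOfProd :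
    (jacToProd p₁ p₂).comp (jacOfProd p₁ p₂) = AddMonoidHom.id _ := by
  refine AddMonoidHom.ext fun ⟨x₁, x₂⟩ => ?_
  induction x₁ using Jac.induction_on with | h D₁ hD₁ => ?_
  induction x₂ using Jac.induction_on with | h D₂ hD₂ => ?_
  simp only [jacToProd, jacOfProd, AddMonoidHom.comp_apply, AddMonoidHom.prod_apply,
    AddMonoidHom.coprod_apply, Jac.pushforward_mk, Jac.mk_add, AddMonoidHom.id_apply, map_add]
  congr 2
  · rw [pushforward_projLeft_inl, pushforward_projLeft_inr, hD₂, Pi.single_zero, add_zero]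
  · rw [pushforward_projRight_inl, pushforward_projRight_inr, hD₁, Pi.single_zero, zero_add]

noncomputable def jacEquiv : (G₁.wedge G₂ p₁ p₂).Jac ≃+ G₁.Jac × G₂.Jac :=
  (jacToProd p₁ p₂).toAddEquiv (jacOfProd p₁ p₂) (jacOfProd_comp_jacToProd p₁ p₂)
    (jacToProd_comp_jacOfProd p₁ p₂)

end FinGraph.wedge

theorem jac_wedge_general (G₁ G₂ : FinGraph) (p₁ : G₁.V) (p₂ : G₂.V) :
    Nonempty ((G₁.wedge G₂ p₁ p₂).Jac ≃+ G₁.Jac × G₂.Jac) :=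
  ⟨FinGraph.wedge.jacEquiv p₁ p₂⟩

/-- The Jacobian of a wedge of two connected graphs is the direct
sum of their Jacobians. -/
theorem jac_wedge (G₁ G₂ : FinGraph) (p₁ : G₁.V) (p₂ : G₂.V)
    (h₁ : G₁.Connected) (h₂ : G₂.Connected) :
    Nonempty ((G₁.wedge G₂ p₁ p₂).Jac ≃+ G₁.Jac × G₂.Jac) :=
  jac_wedge_general G₁ G₂ p₁ p₂
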